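/- Let 𝒢 = G_1 ⊆ ⋯ ⊆ G_m be an edgewise filtration of graphs. Then there exists a triangle-free subgraph H of G_m such that β_1(X(H)) ≥ |B_1(𝒢)|, the number of intervals in the degree-1 barcode of 𝒢. -/

import Mathlib

open Finset

/-- A finite abstract simplicial complex on vertex type `V`, including the empty simplex
(so that the associated chain complex is the augmented one and homology is reduced). -/
structure SimpComplex (V : Type) where
  faces : Finset (Finset V)
  empty_mem : ∅ ∈ faces
  down_closed : ∀ ⦃s t : Finset V⦄, s ∈ faces → t ⊆ s → t ∈ faces

variable {V : Type} [Fintype V] [LinearOrder V]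

/-- The coefficient of the (oriented) simplex `t` in the boundary of the simplex `s`,
using the linear order on the vertices to orient simplices. -/
def bdryCoeff (s t : Finset V) : ℤ :=
  ∑ v ∈ s, if s.erase v = t then (-1 : ℤ) ^ (s.filter (fun x => x < v)).card else 0

variable (𝕜 : Type) [Field 𝕜]

/-- The simplicial boundary operator on the total (augmented) chain module `Finset V → 𝕜`. -/
noncomputable def bdry (V : Type) [Fintype V] [LinearOrder V] :
    (Finset V → 𝕜) →ₗ[𝕜] (Finset V → 𝕜) where
  toFun f t := ∑ s : Finset V, (bdryCoeff s t : 𝕜) * f s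
  map_add' f g := by
    funext t
    simp [mul_add, Finset.sum_add_distrib]
  map_smul' c f := by
    funext t
    simp only [Pi.smul_apply, smul_eq_mul, RingHom.id_apply, Finset.mul_sum]
    exact Finset.sum_congr rfl fun s _ => by ring

/-- The submodule of chains of degree `k`, i.e. supported on faces of `K` with `k+1` vertices. -/
def degChains (K : SimpComplex V) (k : ℤ) : Submodule 𝕜 (Finset V → 𝕜) where
  carrier := {f | ∀ s : Finset V, f s ≠ 0 → s ∈ K.faces ∧ (s.card : ℤ) = k + 1}
  add_mem' := by
    intro f g hf hg s hs
    by_cases h : f s = 0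
    · exact hg s (fun h2 => hs (by simp [h, h2]))
    · exact hf s h
  zero_mem' := by intro s hs; exact absurd rfl hs
  smul_mem' := by
    intro c f hf s hs
    exact hf s (fun h => hs (by simp [h]))

/-- Reduced `k`-cycles of `K` with coefficients in `𝕜`. -/
noncomputable def cycles (K : SimpComplex V) (k : ℤ) : Submodule 𝕜 (Finset V → 𝕜) :=
  degChains 𝕜 K k ⊓ LinearMap.ker (bdry 𝕜 V)

/-- Reduced `k`-boundaries of `K` with coefficients in `𝕜`. -/
noncomputable def boundaries (K : SimpComplex V) (k : ℤ) : Submodule 𝕜 (Finset V → 𝕜) :=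
  (degChains 𝕜 K (k + 1)).map (bdry 𝕜 V)

/-- The reduced Betti number `β_k(K; 𝕜)`: the dimension of reduced simplicial homology,
realized as the quotient of the cycles by the boundaries that are cycles. -/
noncomputable def betti (K : SimpComplex V) (k : ℤ) : ℕ :=
  Module.finrank 𝕜 (↥(cycles 𝕜 K k) ⧸ ((boundaries 𝕜 K k).comap (cycles 𝕜 K k).subtype))

/-- The flag complex of a simple graph: faces are the cliques. -/
noncomputable def flagComplex (G : SimpleGraph V) : SimpComplex V where
  faces := @Finset.filter _ (fun s => G.IsClique (s : Set V))
    (fun _ => Classical.propDecidable _) Finset.univ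
  empty_mem := by simp [Finset.mem_filter]
  down_closed := by
    intro s t hs hts
    simp only [Finset.mem_filter, Finset.mem_univ, true_and] at hs ⊢
    exact hs.subset (by exact_mod_cast hts)

set_option linter.unusedSectionVars false
theorem mem_flagComplex_faces (G : SimpleGraph V) (s : Finset V) :
    s ∈ (flagComplex G).faces ↔ G.IsClique (s : Set V) := by
  simp [flagComplex]

theorem flagComplex_faces_mono {G G' : SimpleGraph V} (h : G ≤ G') :
    (flagComplex G).faces ⊆ (flagComplex G').faces := by
  intro s hs
  rw [mem_flagComplex_faces] at hs ⊢
  exact hs.mono h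

theorem degChains_mono {K L : SimpComplex V} (h : K.faces ⊆ L.faces) (k : ℤ) :
    degChains 𝕜 K k ≤ degChains 𝕜 L k := by
  intro f hf s hs
  exact ⟨h (hf s hs).1, (hf s hs).2⟩

theorem cycles_mono {K L : SimpComplex V} (h : K.faces ⊆ L.faces) (k : ℤ) :
    cycles 𝕜 K k ≤ cycles 𝕜 L k :=
  inf_le_inf (degChains_mono 𝕜 h k) le_rfl

theorem boundaries_mono {K L : SimpComplex V} (h : K.faces ⊆ L.faces) (k : ℤ) :
    boundaries 𝕜 K k ≤ boundaries 𝕜 L k :=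
  Submodule.map_mono (degChains_mono 𝕜 h (k + 1))

/-- The reduced homology of `K` in degree `k`, as a module: cycles modulo boundaries. -/
noncomputable abbrev homologyMod (K : SimpComplex V) (k : ℤ) :=
  ↥(cycles 𝕜 K k) ⧸ (boundaries 𝕜 K k).comap (cycles 𝕜 K k).subtype

/-- The map on reduced homology induced by an inclusion of simplicial complexes. -/
noncomputable def inducedMap {K L : SimpComplex V} (h : K.faces ⊆ L.faces) (k : ℤ) :
    homologyMod 𝕜 K k →ₗ[𝕜] homologyMod 𝕜 L k :=
  Submodule.mapQ _ _ (Submodule.inclusion (cycles_mono 𝕜 h k)) (by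
    intro x hx
    simp only [Submodule.mem_comap, Submodule.subtype_apply] at hx ⊢
    simpa using boundaries_mono 𝕜 h k hx)

/-- `G`, restricted to indices `1, …, m`, is an edgewise filtration: increasing, with `G i`
having exactly `i` edges. -/
def IsEdgewiseFiltration {W : Type} (G : ℕ → SimpleGraph W) (m : ℕ) : Prop :=
  (∀ i j : ℕ, 1 ≤ i → i ≤ j → j ≤ m → G i ≤ G j) ∧
  (∀ i : ℕ, 1 ≤ i → i ≤ m → Nat.card (G i).edgeSet = i)

open Classical in
/-- `B` is the degree-`k` barcode (a multiset of half-open intervals `[a, b)`, encoded as pairs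
`(a, b)` with `1 ≤ a < b ≤ m + 1`) of the filtration of flag complexes
`X(G 1) ⊆ ⋯ ⊆ X(G m)`: for all `1 ≤ i ≤ j ≤ m`, the rank of the map
`H̃_k(X(G i)) → H̃_k(X(G j))` induced by inclusion equals the number of intervals `[a, b)` of `B`
with `a ≤ i` and `j < b`. (This rank condition characterizes the interval decomposition of the
persistence module.) -/
def IsBarcode (G : ℕ → SimpleGraph V) (m : ℕ) (k : ℤ) (B : Multiset (ℕ × ℕ)) : Prop :=
  (∀ p ∈ B, 1 ≤ p.1 ∧ p.1 < p.2 ∧ p.2 ≤ m + 1) ∧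
  ∀ i j : ℕ, 1 ≤ i → i ≤ j → j ≤ m →
    ∀ h : (flagComplex (G i)).faces ⊆ (flagComplex (G j)).faces,
      Module.finrank 𝕜 (LinearMap.range (inducedMap 𝕜 h k)) =
        Multiset.card (B.filter (fun p => p.1 ≤ i ∧ j < p.2))

/-!
The triangle-free graph is built edge by edge along the filtration: we keep `H_a ≤ G_a`
triangle-free, with every connected component of `G_a` connected in `H_a`, and with
`dim Z₁(X(H_a))` at least the number of bars born by time `a`. Let `uv` be the edge added at
time `a + 1`.
* If `uv` closes a triangle with `H_a`, every cycle of `X(G_{a+1})` differs from a cycle of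
  `X(G_a)` by the boundary of that triangle, so no bar is born, and we keep `H_a`.
* Otherwise `H_a + uv` is still triangle-free. If `u` and `v` are connected in `H_a`, the edge
  `uv` closes a new cycle in `H_a + uv`, which pays for the at most one bar born (a cycle of
  `X(G_{a+1})` vanishing on `uv` is a cycle of `X(G_a)`). If not, `uv` is a bridge of `G_{a+1}`,
  no cycle uses it, and no bar is born.
Finally `X(H)` has no `2`-simplices, so `β₁(X(H)) = dim Z₁(X(H))`.
-/

theorem bdry_single_one (s : Finset V) :
    bdry 𝕜 V (Pi.single s 1)
      = ∑ v ∈ s, Pi.single (s.erase v) ((-1 : 𝕜) ^ #{x ∈ s | x < v}) := by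
  funext t
  simp only [bdry, LinearMap.coe_mk, AddHom.coe_mk, Finset.sum_apply, Pi.single_apply,
    mul_ite, mul_one, mul_zero, Finset.sum_ite_eq', Finset.mem_univ, if_true, bdryCoeff]
  push_cast
  simp only [eq_comm]

theorem bdry_single (s : Finset V) (c : 𝕜) :
    bdry 𝕜 V (Pi.single s c) = c • bdry 𝕜 V (Pi.single s 1) := by
  rw [← map_smul, ← Pi.single_smul', smul_eq_mul, mul_one]

theorem card_filter_erase_lt_add {s : Finset V} {v : V} (hv : v ∈ s) (w : V) :
    #{x ∈ s.erase v | x < w} + (if v < w then 1 else 0) = #{x ∈ s | x < w} := by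
  rw [Finset.filter_erase]
  split_ifs with h
  · exact Finset.card_erase_add_one (Finset.mem_filter.mpr ⟨hv, h⟩)
  · rw [add_zero, Finset.erase_eq_of_notMem]
    simp [h]

theorem bdry_bdry_single (s : Finset V) : bdry 𝕜 V (bdry 𝕜 V (Pi.single s 1)) = 0 := by
  set F : (Σ _ : V, V) → Finset V → 𝕜 := fun p => Pi.single ((s.erase p.1).erase p.2)
    ((-1 : 𝕜) ^ (#{x ∈ s | x < p.1} + #{x ∈ s.erase p.1 | x < p.2})) with hF
  have hsum : bdry 𝕜 V (bdry 𝕜 V (Pi.single s 1))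
      = ∑ p ∈ s.sigma (fun v => s.erase v), F p := by
    rw [Finset.sum_sigma, bdry_single_one, map_sum]
    refine Finset.sum_congr rfl fun v _ => ?_
    rw [bdry_single, bdry_single_one, Finset.smul_sum]
    refine Finset.sum_congr rfl fun w _ => ?_
    rw [← Pi.single_smul', smul_eq_mul, ← pow_add]
  -- the terms for `(v, w)` and `(w, v)` cancel: their signs differ by one transposition
  have hswap : ∀ v ∈ s, ∀ w ∈ s, v ≠ w → F ⟨v, w⟩ + F ⟨w, v⟩ = 0 := by
    intro v hv w hw hvw
    have h1 := card_filter_erase_lt_add hv w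
    have h2 := card_filter_erase_lt_add hw v
    simp only [hF, Finset.erase_right_comm (a := v), ← Pi.single_add]
    rcases hvw.lt_or_gt with h | h
    · simp only [h, h.not_gt, if_true, if_false] at h1 h2
      rw [show #{x ∈ s | x < w} + #{x ∈ s.erase w | x < v}
        = #{x ∈ s | x < v} + #{x ∈ s.erase v | x < w} + 1 by omega, pow_succ]
      simp
    · simp only [h, h.not_gt, if_true, if_false] at h1 h2
      rw [show #{x ∈ s | x < v} + #{x ∈ s.erase v | x < w}
        = #{x ∈ s | x < w} + #{x ∈ s.erase w | x < v} + 1 by omega, pow_succ]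
      simp
  rw [hsum]
  refine Finset.sum_involution (fun p _ => ⟨p.2, p.1⟩) ?_ ?_ ?_ fun p _ => rfl
  · rintro ⟨v, w⟩ hp
    simp only [Finset.mem_sigma, Finset.mem_erase] at hp
    exact hswap v hp.1 w hp.2.2 hp.2.1.symm
  · rintro ⟨v, w⟩ hp _ h
    simp only [Finset.mem_sigma, Finset.mem_erase] at hp
    exact hp.2.1 (congrArg Sigma.fst h)
  · rintro ⟨v, w⟩ hp
    simp only [Finset.mem_sigma, Finset.mem_erase] at hp ⊢
    exact ⟨hp.2.2, hp.2.1.symm, hp.1⟩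

theorem bdry_bdry (f : Finset V → 𝕜) : bdry 𝕜 V (bdry 𝕜 V f) = 0 := by
  rw [← Finset.univ_sum_single f]
  simp only [map_sum]
  refine Finset.sum_eq_zero fun s _ => ?_
  rw [bdry_single, map_smul, bdry_bdry_single, smul_zero]

theorem bdry_single_pair {x y : V} (hxy : x < y) :
    bdry 𝕜 V (Pi.single {x, y} 1) = Pi.single {y} 1 - Pi.single {x} 1 := by
  have hx : ({x, y} : Finset V).erase x = {y} := Finset.erase_insert (by simpa using hxy.ne)
  have hy : ({x, y} : Finset V).erase y = {x} := by
    rw [Finset.pair_comm]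
    exact Finset.erase_insert (by simpa using hxy.ne')
  rw [bdry_single_one, Finset.sum_pair hxy.ne, hx, hy]
  simp [Finset.filter_insert, Finset.filter_singleton, hxy, hxy.not_gt, Pi.single_neg]
  abel

theorem exists_bdry_single_pair {x y : V} (hxy : x ≠ y) :
    ∃ a : 𝕜, a ≠ 0 ∧
      bdry 𝕜 V (Pi.single {x, y} a) = Pi.single {y} 1 - Pi.single {x} 1 := by
  rcases hxy.lt_or_gt with h | h
  · exact ⟨1, one_ne_zero, bdry_single_pair 𝕜 h⟩
  · refine ⟨-1, neg_ne_zero.mpr one_ne_zero, ?_⟩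
    rw [bdry_single, Finset.pair_comm, bdry_single_pair 𝕜 h, neg_one_smul, neg_sub]

theorem single_mem_degChains {K : SimpComplex V} {s : Finset V} (hs : s ∈ K.faces) {k : ℤ}
    (hk : (#s : ℤ) = k + 1) (c : 𝕜) : Pi.single s c ∈ degChains 𝕜 K k := by
  intro t ht
  obtain rfl : t = s := by
    by_contra h
    exact ht (by simp [h])
  exact ⟨hs, hk⟩

theorem bdry_single_mem_degChains {K : SimpComplex V} {s : Finset V} (hs : s ∈ K.faces) {k : ℤ}
    (hk : (#s : ℤ) = k + 2) : bdry 𝕜 V (Pi.single s 1) ∈ degChains 𝕜 K k := by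
  rw [bdry_single_one]
  refine Submodule.sum_mem _ fun v hv => single_mem_degChains 𝕜 (K.down_closed hs
    (Finset.erase_subset v s)) ?_ _
  rw [Finset.card_erase_of_mem hv, Nat.cast_sub (Finset.card_pos.mpr ⟨v, hv⟩)]
  omega

theorem bdry_single_apply_erase_ne_zero {s : Finset V} {v : V} (hv : v ∈ s) :
    bdry 𝕜 V (Pi.single s 1) (s.erase v) ≠ 0 := by
  rw [bdry_single_one, Finset.sum_apply, Finset.sum_eq_single_of_mem v hv, Pi.single_eq_same]
  · exact pow_ne_zero _ (neg_ne_zero.mpr one_ne_zero)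
  · intro w hw hwv
    exact Pi.single_eq_of_ne (fun h => hwv ((Finset.erase_inj s hw).mp h.symm)) _

theorem mem_cycles_iff {K : SimpComplex V} {k : ℤ} {f : Finset V → 𝕜} :
    f ∈ cycles 𝕜 K k ↔ f ∈ degChains 𝕜 K k ∧ bdry 𝕜 V f = 0 :=
  Submodule.mem_inf

section OneNewFace

variable {K K' : SimpComplex V} {k : ℤ} {e : Finset V}

theorem mem_degChains_of_apply_eq_zero
    (hK : ∀ s ∈ K'.faces, (#s : ℤ) = k + 1 → s ≠ e → s ∈ K.faces)
    {f : Finset V → 𝕜} (hf : f ∈ degChains 𝕜 K' k) (he : f e = 0) :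
    f ∈ degChains 𝕜 K k := by
  intro s hs
  obtain ⟨hsK', hcard⟩ := hf s hs
  exact ⟨hK s hsK' hcard (fun h => hs (h ▸ he)), hcard⟩

theorem cycles_inf_ker_proj_le
    (hK : ∀ s ∈ K'.faces, (#s : ℤ) = k + 1 → s ≠ e → s ∈ K.faces) :
    cycles 𝕜 K' k ⊓ LinearMap.ker (LinearMap.proj e) ≤ cycles 𝕜 K k := by
  rintro f ⟨hf, he⟩
  rw [SetLike.mem_coe, mem_cycles_iff 𝕜] at hf
  exact (mem_cycles_iff 𝕜).mpr ⟨mem_degChains_of_apply_eq_zero 𝕜 hK hf.1 he, hf.2⟩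

theorem cycles_le_sup_boundaries_of_insert_mem
    (hK : ∀ s ∈ K'.faces, (#s : ℤ) = k + 1 → s ≠ e → s ∈ K.faces)
    {w : V} (hw : w ∉ e) (hT : insert w e ∈ K'.faces) (he : (#e : ℤ) = k + 1) :
    cycles 𝕜 K' k ≤ cycles 𝕜 K k ⊔ boundaries 𝕜 K' k := by
  intro z hz
  rw [mem_cycles_iff 𝕜] at hz
  set β := bdry 𝕜 V (Pi.single (insert w e) 1)
  have hcard : (#(insert w e) : ℤ) = k + 2 := by
    rw [Finset.card_insert_of_notMem hw]
    push_cast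
    omega
  have hβ : β ∈ boundaries 𝕜 K' k :=
    ⟨_, single_mem_degChains 𝕜 hT (by rw [hcard]; ring) 1, rfl⟩
  have hβe : β e ≠ 0 := by
    simpa [Finset.erase_insert hw] using
      bdry_single_apply_erase_ne_zero 𝕜 (Finset.mem_insert_self w e)
  set c := z e / β e
  have hz' : z - c • β ∈ cycles 𝕜 K k := by
    refine (mem_cycles_iff 𝕜).mpr ⟨mem_degChains_of_apply_eq_zero 𝕜 hK ?_ ?_, ?_⟩
    · exact Submodule.sub_mem _ hz.1
        (Submodule.smul_mem _ c (bdry_single_mem_degChains 𝕜 hT hcard))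
    · simp [c, hβe]
    · rw [map_sub, map_smul, hz.2, bdry_bdry, smul_zero, sub_zero]
  rw [← sub_add_cancel z (c • β)]
  exact Submodule.add_mem_sup hz' (Submodule.smul_mem _ c hβ)

end OneNewFace

section InducedMap

variable {K L : SimpComplex V} (h : K.faces ⊆ L.faces) {k : ℤ}

theorem mk_mem_range_inducedMap {z : cycles 𝕜 L k}
    (hz : (z : Finset V → 𝕜) ∈ cycles 𝕜 K k) :
    Submodule.Quotient.mk z ∈ LinearMap.range (inducedMap 𝕜 h k) :=
  ⟨Submodule.Quotient.mk ⟨z, hz⟩, rfl⟩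

theorem finrank_range_inducedMap_eq_betti
    (hsup : cycles 𝕜 L k ≤ cycles 𝕜 K k ⊔ boundaries 𝕜 L k) :
    Module.finrank 𝕜 (LinearMap.range (inducedMap 𝕜 h k)) = betti 𝕜 L k := by
  suffices LinearMap.range (inducedMap 𝕜 h k) = ⊤ by
    rw [this, finrank_top]
    rfl
  refine Submodule.eq_top_iff'.mpr fun y => ?_
  obtain ⟨z, rfl⟩ := Submodule.Quotient.mk_surjective _ y
  obtain ⟨x, hx, b, hb, hxb⟩ := Submodule.mem_sup.mp (hsup z.2)
  have hxL : x ∈ cycles 𝕜 L k := cycles_mono 𝕜 h k hx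
  have : (Submodule.Quotient.mk z : homologyMod 𝕜 L k) = Submodule.Quotient.mk ⟨x, hxL⟩ := by
    rw [Submodule.Quotient.eq, Submodule.mem_comap, Submodule.subtype_apply,
      Submodule.coe_sub, ← hxb, add_sub_cancel_left]
    exact hb
  rw [this]
  exact mk_mem_range_inducedMap 𝕜 h hx

theorem betti_le_finrank_range_inducedMap_add {W : Type} [AddCommGroup W] [Module 𝕜 W]
    [FiniteDimensional 𝕜 W] (φ : (Finset V → 𝕜) →ₗ[𝕜] W)
    (hφ : cycles 𝕜 L k ⊓ LinearMap.ker φ ≤ cycles 𝕜 K k) :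
    betti 𝕜 L k
      ≤ Module.finrank 𝕜 (LinearMap.range (inducedMap 𝕜 h k)) + Module.finrank 𝕜 W := by
  set R := LinearMap.range (inducedMap 𝕜 h k)
  set ψ : cycles 𝕜 L k →ₗ[𝕜] homologyMod 𝕜 L k ⧸ R := R.mkQ ∘ₗ Submodule.mkQ _
  set g : cycles 𝕜 L k →ₗ[𝕜] W := φ ∘ₗ (cycles 𝕜 L k).subtype
  have hker : LinearMap.ker g ≤ LinearMap.ker ψ := fun z hz => by
    rw [LinearMap.mem_ker, LinearMap.comp_apply, Submodule.mkQ_apply, Submodule.mkQ_apply,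
      Submodule.Quotient.mk_eq_zero]
    exact mk_mem_range_inducedMap 𝕜 h (hφ ⟨z.2, hz⟩)
  have hsurj : Function.Surjective ((LinearMap.ker g).liftQ ψ hker) := by
    intro y
    obtain ⟨y, rfl⟩ := Submodule.Quotient.mk_surjective _ y
    obtain ⟨z, rfl⟩ := Submodule.Quotient.mk_surjective _ y
    exact ⟨Submodule.Quotient.mk z, rfl⟩
  calc betti 𝕜 L k
      = Module.finrank 𝕜 R + Module.finrank 𝕜 (homologyMod 𝕜 L k ⧸ R) := by
        rw [add_comm, Submodule.finrank_quotient_add_finrank]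
        rfl
    _ ≤ Module.finrank 𝕜 R + Module.finrank 𝕜 (cycles 𝕜 L k ⧸ LinearMap.ker g) :=
        Nat.add_le_add_left (LinearMap.finrank_le_finrank_of_surjective hsurj) _
    _ = Module.finrank 𝕜 R + Module.finrank 𝕜 (LinearMap.range g) := by
        rw [g.quotKerEquivRange.finrank_eq]
    _ ≤ Module.finrank 𝕜 R + Module.finrank 𝕜 W :=
        Nat.add_le_add_left (Submodule.finrank_le _) _

end InducedMap

theorem betti_eq_finrank_cycles {K : SimpComplex V} {k : ℤ} (hK : boundaries 𝕜 K k = ⊥) :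
    betti 𝕜 K k = Module.finrank 𝕜 (cycles 𝕜 K k) := by
  rw [betti, hK, Submodule.comap_bot, Submodule.ker_subtype]
  exact (Submodule.quotEquivOfEqBot _ rfl).finrank_eq

namespace SimpleGraph

variable {α : Type} {G G' H H' : SimpleGraph α} {u v : α}

theorem exists_eq_sup_edge_of_card_edgeSet_eq_add_one [Finite α] (hle : G ≤ G')
    (hcard : Nat.card G'.edgeSet = Nat.card G.edgeSet + 1) :
    ∃ u v, u ≠ v ∧ ¬G.Adj u v ∧ G' = G ⊔ edge u v := by
  rw [Nat.card_coe_set_eq, Nat.card_coe_set_eq] at hcard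
  have hsub : G.edgeSet ⊆ G'.edgeSet := edgeSet_mono hle
  obtain ⟨e, he⟩ : ∃ e, G'.edgeSet \ G.edgeSet = {e} := by
    rw [← Set.ncard_eq_one, Set.ncard_sdiff hsub (Set.toFinite _)]
    omega
  induction e using Sym2.ind with
  | _ u v =>
    have huv : s(u, v) ∈ G'.edgeSet \ G.edgeSet := he ▸ rfl
    have hne : u ≠ v := (G'.mem_edgeSet.mp huv.1).ne
    refine ⟨u, v, hne, huv.2, edgeSet_injective ?_⟩
    rw [edgeSet_sup, edgeSet_edge_of_ne hne, ← he, Set.union_sdiff_cancel hsub]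

theorem cliqueFree_three_sup_edge (hH : H.CliqueFree 3)
    (hcom : ∀ w, ¬(H.Adj u w ∧ H.Adj v w)) : (H ⊔ edge u v).CliqueFree 3 := by
  classical
  intro t ht
  have hu : u ∈ t := hH.mem_of_sup_edge_isNClique ht
  have hv : v ∈ t := hH.mem_of_sup_edge_isNClique (edge_comm u v ▸ ht)
  obtain ⟨w, hw, hwuv⟩ : ∃ w ∈ t, w ∉ ({u, v} : Finset α) :=
    Finset.exists_mem_notMem_of_card_lt_card
      (by rw [ht.card_eq]; exact Finset.card_le_two.trans_lt (by norm_num))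
  simp only [Finset.mem_insert, Finset.mem_singleton, not_or] at hwuv
  have huw := ht.isClique hu hw (Ne.symm hwuv.1)
  have hvw := ht.isClique hv hw (Ne.symm hwuv.2)
  simp only [sup_adj, edge_adj, hwuv.1, hwuv.2, and_false, false_and, or_false] at huw hvw
  exact hcom w ⟨huw, hvw⟩

theorem reachable_sup_edge_le (hGH : G.Reachable ≤ H.Reachable) (hHH' : H ≤ H')
    (huv : H'.Reachable u v) : (G ⊔ edge u v).Reachable ≤ H'.Reachable := by
  intro x y hxy
  rw [reachable_iff_reflTransGen] at hxy
  induction hxy with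
  | refl => rfl
  | tail _ hadj ih =>
    refine ih.trans ?_
    rcases hadj with hadj | hadj
    · exact (hGH _ _ hadj.reachable).mono hHH'
    · rcases ((edge_adj _ _ _ _).mp hadj).1 with ⟨rfl, rfl⟩ | ⟨rfl, rfl⟩
      · exact huv
      · exact huv.symm

end SimpleGraph

section FlagComplex

open SimpleGraph

variable {G H : SimpleGraph V} {u v : V}

theorem mem_flagComplex_pair_iff {x y : V} (hxy : x ≠ y) :
    ({x, y} : Finset V) ∈ (flagComplex G).faces ↔ G.Adj x y := by
  rw [mem_flagComplex_faces, Finset.coe_pair, isClique_pair]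
  exact ⟨fun h => h hxy, fun h _ => h⟩

theorem single_pair_mem_degChains {x y : V} (hxy : G.Adj x y) (a : 𝕜) :
    Pi.single {x, y} a ∈ degChains 𝕜 (flagComplex G) 1 :=
  single_mem_degChains 𝕜 ((mem_flagComplex_pair_iff hxy.ne).mpr hxy)
    (by rw [Finset.card_pair hxy.ne]; rfl) a

theorem apply_pair_eq_zero_of_mem_degChains (huv : u ≠ v) (hnadj : ¬G.Adj u v)
    {f : Finset V → 𝕜} (hf : f ∈ degChains 𝕜 (flagComplex G) 1) : f {u, v} = 0 := by
  by_contra h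
  exact hnadj ((mem_flagComplex_pair_iff huv).mp (hf _ h).1)

theorem mem_flagComplex_of_mem_sup_edge (s : Finset V)
    (hs : s ∈ (flagComplex (G ⊔ edge u v)).faces) (hcard : (#s : ℤ) = 2)
    (hne : s ≠ {u, v}) : s ∈ (flagComplex G).faces := by
  obtain ⟨x, y, hxy, rfl⟩ := Finset.card_eq_two.mp (show #s = 2 by omega)
  rw [mem_flagComplex_pair_iff hxy] at hs ⊢
  refine hs.resolve_right fun h => hne ?_
  rcases ((edge_adj _ _ _ _).mp h).1 with ⟨rfl, rfl⟩ | ⟨rfl, rfl⟩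
  · rfl
  · exact Finset.pair_comm _ _

theorem boundaries_flagComplex_eq_bot (hH : H.CliqueFree 3) :
    boundaries 𝕜 (flagComplex H) 1 = ⊥ := by
  refine (Submodule.eq_bot_iff _).mpr ?_
  rintro _ ⟨f, hf, rfl⟩
  suffices f = 0 by rw [this, map_zero]
  funext s
  by_contra hs
  obtain ⟨hface, hcard⟩ := hf s hs
  exact hH s ⟨(mem_flagComplex_faces H s).mp hface, by omega⟩

theorem cycles_flagComplex_sup_edge_le_sup_boundaries {w : V} (huv : u ≠ v)
    (huw : G.Adj u w) (hvw : G.Adj v w) :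
    cycles 𝕜 (flagComplex (G ⊔ edge u v)) 1
      ≤ cycles 𝕜 (flagComplex G) 1 ⊔ boundaries 𝕜 (flagComplex (G ⊔ edge u v)) 1 := by
  refine cycles_le_sup_boundaries_of_insert_mem 𝕜 mem_flagComplex_of_mem_sup_edge
    (w := w) (by simp [huw.ne', hvw.ne']) ?_ (by rw [Finset.card_pair huv]; rfl)
  rw [mem_flagComplex_faces, Finset.coe_insert, Finset.coe_pair, isClique_insert, isClique_pair]
  refine ⟨fun _ => Or.inr ((edge_adj _ _ _ _).mpr ⟨Or.inl ⟨rfl, rfl⟩, huv⟩), ?_⟩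
  rintro b (rfl | rfl) -
  · exact Or.inl huw.symm
  · exact Or.inl hvw.symm

theorem sum_bdry_apply_singleton_eq_zero {C : Finset V}
    (hC : ∀ x y, G.Adj x y → x ∈ C → y ∈ C) {f : Finset V → 𝕜}
    (hf : f ∈ degChains 𝕜 (flagComplex G) 1) : ∑ w ∈ C, bdry 𝕜 V f {w} = 0 := by
  rw [← Finset.univ_sum_single f, map_sum]
  simp only [Finset.sum_apply]
  rw [Finset.sum_comm]
  refine Finset.sum_eq_zero fun s _ => ?_
  by_cases hs : f s = 0
  · simp [hs]
  obtain ⟨hface, hcard⟩ := hf s hs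
  obtain ⟨x, y, hxy, rfl⟩ := Finset.card_eq_two.mp (show #s = 2 by omega)
  have hadj := (mem_flagComplex_pair_iff hxy).mp hface
  obtain ⟨a, ha, hbd⟩ := exists_bdry_single_pair 𝕜 hxy
  rw [← div_mul_cancel₀ (f {x, y}) ha, ← smul_eq_mul, Pi.single_smul', map_smul, hbd]
  have hxC : x ∈ C ↔ y ∈ C := ⟨hC x y hadj, hC y x hadj.symm⟩
  simp [Pi.single_apply, mul_sub, Finset.sum_sub_distrib, hxC]

theorem cycles_flagComplex_sup_edge_le_of_not_reachable (hnr : ¬G.Reachable u v) :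
    cycles 𝕜 (flagComplex (G ⊔ edge u v)) 1 ≤ cycles 𝕜 (flagComplex G) 1 := by
  classical
  intro z hz
  rw [mem_cycles_iff] at hz
  have huv : u ≠ v := fun h => hnr (h ▸ Reachable.refl u)
  obtain ⟨a, ha, hbd⟩ := exists_bdry_single_pair 𝕜 huv
  set c := z {u, v} / a
  have hrest : z - c • Pi.single {u, v} a ∈ degChains 𝕜 (flagComplex G) 1 :=
    mem_degChains_of_apply_eq_zero 𝕜 mem_flagComplex_of_mem_sup_edge
      (Submodule.sub_mem _ hz.1 (Submodule.smul_mem _ c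
        (single_pair_mem_degChains 𝕜 (by simp [edge_adj, huv]) a)))
      (by simp [c, ha])
  -- summing the boundary over the component of `u` detects the coefficient of the bridge `uv`
  have hsum := sum_bdry_apply_singleton_eq_zero 𝕜 (C := {x | G.Reachable u x})
    (fun x y hxy hx => by simpa using (Finset.mem_filter.mp hx).2.trans hxy.reachable) hrest
  rw [map_sub, hz.2, map_smul, hbd] at hsum
  have hzuv : z {u, v} = 0 := by
    simpa [Pi.single_apply, mul_sub, Finset.sum_sub_distrib, hnr, c, ha] using hsum
  exact (mem_cycles_iff 𝕜).mpr
    ⟨mem_degChains_of_apply_eq_zero 𝕜 mem_flagComplex_of_mem_sup_edge hz.1 hzuv, hz.2⟩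

theorem exists_mem_degChains_bdry_eq_of_reachable {x y : V} (h : H.Reachable x y) :
    ∃ c ∈ degChains 𝕜 (flagComplex H) 1,
      bdry 𝕜 V c = Pi.single {y} 1 - Pi.single {x} 1 := by
  obtain ⟨p⟩ := h
  induction p with
  | nil => exact ⟨0, Submodule.zero_mem _, by rw [map_zero, sub_self]⟩
  | cons hadj _ ih =>
    obtain ⟨c, hc, hbc⟩ := ih
    obtain ⟨a, -, hbd⟩ := exists_bdry_single_pair 𝕜 hadj.ne
    refine ⟨_ + c, Submodule.add_mem _ (single_pair_mem_degChains 𝕜 hadj a) hc, ?_⟩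
    rw [map_add, hbd, hbc]
    abel

theorem finrank_cycles_flagComplex_lt_sup_edge (huv : u ≠ v) (hnadj : ¬H.Adj u v)
    (hr : H.Reachable u v) :
    Module.finrank 𝕜 (cycles 𝕜 (flagComplex H) 1)
      < Module.finrank 𝕜 (cycles 𝕜 (flagComplex (H ⊔ edge u v)) 1) := by
  obtain ⟨c, hc, hbc⟩ := exists_mem_degChains_bdry_eq_of_reachable 𝕜 hr
  obtain ⟨a, ha, hbd⟩ := exists_bdry_single_pair 𝕜 huv
  have hle : (flagComplex H).faces ⊆ (flagComplex (H ⊔ edge u v)).faces :=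
    flagComplex_faces_mono le_sup_left
  have hz : c - Pi.single {u, v} a ∈ cycles 𝕜 (flagComplex (H ⊔ edge u v)) 1 :=
    (mem_cycles_iff 𝕜).mpr ⟨Submodule.sub_mem _ (degChains_mono 𝕜 hle 1 hc)
      (single_pair_mem_degChains 𝕜 (by simp [edge_adj, huv]) a),
      by rw [map_sub, hbc, hbd, sub_self]⟩
  have hzH : c - Pi.single {u, v} a ∉ cycles 𝕜 (flagComplex H) 1 := fun h => by
    have := apply_pair_eq_zero_of_mem_degChains 𝕜 huv hnadj ((mem_cycles_iff 𝕜).mp h).1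
    simp [apply_pair_eq_zero_of_mem_degChains 𝕜 huv hnadj hc, ha] at this
  exact Submodule.finrank_lt_finrank_of_lt
    (SetLike.lt_iff_le_and_exists.mpr ⟨cycles_mono 𝕜 hle 1, _, hz, hzH⟩)

theorem exists_cliqueFree_three_le_sup_edge {G' : SimpleGraph V} (huv : u ≠ v)
    (hnadj : ¬G.Adj u v) (hG' : G' = G ⊔ edge u v) (hHG : H ≤ G) (hH : H.CliqueFree 3)
    (hreach : G.Reachable ≤ H.Reachable) (h : (flagComplex G).faces ⊆ (flagComplex G').faces) :
    ∃ H' ≤ G', H'.CliqueFree 3 ∧ G'.Reachable ≤ H'.Reachable ∧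
      betti 𝕜 (flagComplex G') 1 + Module.finrank 𝕜 (cycles 𝕜 (flagComplex H) 1)
        ≤ Module.finrank 𝕜 (LinearMap.range (inducedMap 𝕜 h 1))
          + Module.finrank 𝕜 (cycles 𝕜 (flagComplex H') 1) := by
  subst hG'
  by_cases hcom : ∃ w, H.Adj u w ∧ H.Adj v w
  · obtain ⟨w, huw, hvw⟩ := hcom
    refine ⟨H, hHG.trans le_sup_left, hH,
      reachable_sup_edge_le hreach le_rfl (huw.reachable.trans hvw.reachable.symm), ?_⟩
    rw [finrank_range_inducedMap_eq_betti 𝕜 h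
      (cycles_flagComplex_sup_edge_le_sup_boundaries 𝕜 huv (hHG huw) (hHG hvw))]
  have hadj : (H ⊔ edge u v).Adj u v := by simp [edge_adj, huv]
  refine ⟨H ⊔ edge u v, sup_le_sup_right hHG _,
    cliqueFree_three_sup_edge hH (not_exists.mp hcom),
    reachable_sup_edge_le hreach le_sup_left hadj.reachable, ?_⟩
  by_cases hr : H.Reachable u v
  · have hbetti := betti_le_finrank_range_inducedMap_add 𝕜 h (LinearMap.proj {u, v})
      (cycles_inf_ker_proj_le 𝕜 (k := 1) mem_flagComplex_of_mem_sup_edge)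
    have hcycles := finrank_cycles_flagComplex_lt_sup_edge 𝕜 huv (fun hHuv => hnadj (hHG hHuv)) hr
    rw [Module.finrank_self] at hbetti
    omega
  · have hbetti := finrank_range_inducedMap_eq_betti 𝕜 h
      ((cycles_flagComplex_sup_edge_le_of_not_reachable 𝕜 fun hGuv => hr (hreach u v hGuv)).trans
        le_sup_left)
    have hcycles := Submodule.finrank_mono
      (cycles_mono 𝕜 (flagComplex_faces_mono (le_sup_left : H ≤ H ⊔ edge u v)) 1)
    omega

end FlagComplex

namespace IsBarcode

variable {G : ℕ → SimpleGraph V} {m : ℕ} {k : ℤ} {B : Multiset (ℕ × ℕ)}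

theorem card_filter_eq_betti (hB : IsBarcode 𝕜 G m k B) {i : ℕ} (hi : 1 ≤ i)
    (him : i ≤ m) :
    Multiset.card (B.filter fun p => p.1 ≤ i ∧ i < p.2) = betti 𝕜 (flagComplex (G i)) k := by
  rw [← hB.2 i i hi le_rfl him subset_rfl, finrank_range_inducedMap_eq_betti 𝕜 _ le_sup_left]

theorem card_filter_succ_add_finrank_range (hB : IsBarcode 𝕜 G m k B) {a : ℕ} (ha : 1 ≤ a)
    (ham : a + 1 ≤ m) (h : (flagComplex (G a)).faces ⊆ (flagComplex (G (a + 1))).faces) :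
    Multiset.card (B.filter fun p => p.1 ≤ a + 1)
        + Module.finrank 𝕜 (LinearMap.range (inducedMap 𝕜 h k))
      = Multiset.card (B.filter fun p => p.1 ≤ a) + betti 𝕜 (flagComplex (G (a + 1))) k := by
  rw [hB.2 a (a + 1) ha (by omega) ham h, ← hB.card_filter_eq_betti 𝕜 (by omega) ham,
    ← Multiset.card_add, ← Multiset.card_add,
    Multiset.filter_add_filter (p := fun p : ℕ × ℕ => p.1 ≤ a + 1),
    Multiset.filter_add_filter (p := fun p : ℕ × ℕ => p.1 ≤ a)]
  congr 2 <;> refine Multiset.filter_congr fun p hp => ?_ <;> have := hB.1 p hp <;> omega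

open SimpleGraph in
theorem exists_cliqueFree_three_le (hG : IsEdgewiseFiltration G m)
    (hB : IsBarcode 𝕜 G m 1 B) {a : ℕ} (ha : 1 ≤ a) (ham : a ≤ m) :
    ∃ H ≤ G a, H.CliqueFree 3 ∧ (G a).Reachable ≤ H.Reachable ∧
      Multiset.card (B.filter fun p => p.1 ≤ a)
        ≤ Module.finrank 𝕜 (cycles 𝕜 (flagComplex H) 1) := by
  induction a, ha using Nat.le_induction with
  | base =>
    obtain ⟨u, v, -, -, hG1_eq⟩ := exists_eq_sup_edge_of_card_edgeSet_eq_add_one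
      (bot_le : ⊥ ≤ G 1) (by simp [hG.2 1 le_rfl ham])
    have hG1 : (G 1).CliqueFree 3 := hG1_eq ▸ (cliqueFree_bot le_rfl).sup_edge u v
    refine ⟨G 1, le_rfl, hG1, le_rfl, le_of_eq ?_⟩
    rw [← betti_eq_finrank_cycles 𝕜 (boundaries_flagComplex_eq_bot 𝕜 hG1),
      ← hB.card_filter_eq_betti 𝕜 le_rfl ham]
    congr 1
    exact Multiset.filter_congr fun p hp => by have := hB.1 p hp; omega
  | succ a ha ih =>
    obtain ⟨H, hHG, hH, hreach, hcount⟩ := ih (by omega)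
    have hle := hG.1 a (a + 1) ha (by omega) ham
    obtain ⟨u, v, huv, hnadj, hG'⟩ := exists_eq_sup_edge_of_card_edgeSet_eq_add_one hle
      (by rw [hG.2 a ha (by omega), hG.2 (a + 1) (by omega) ham])
    have h := flagComplex_faces_mono hle
    obtain ⟨H', hH'G, hH', hreach', hstep⟩ :=
      exists_cliqueFree_three_le_sup_edge 𝕜 huv hnadj hG' hHG hH hreach h
    have hbars := hB.card_filter_succ_add_finrank_range 𝕜 ha ham h
    exact ⟨H', hH'G, hH', hreach', by omega⟩

end IsBarcode

/-- For an edgewise filtration `𝒢 = G_1 ⊆ ⋯ ⊆ G_m`, there is a triangle-free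
subgraph `H` of `G_m` with `β₁(X(H)) ≥ |B₁(𝒢)|`, the number of intervals in the degree-1
barcode. -/
theorem exists_triangleFree_subgraph_betti_ge_barcodeCard
    (𝕜 : Type) [Field 𝕜] {V : Type} [Fintype V] [LinearOrder V]
    (G : ℕ → SimpleGraph V) (m : ℕ) (hm : 1 ≤ m) (hG : IsEdgewiseFiltration G m)
    (B : Multiset (ℕ × ℕ)) (hB : IsBarcode 𝕜 G m 1 B) :
    ∃ H : SimpleGraph V, H ≤ G m ∧ H.CliqueFree 3 ∧
      Multiset.card B ≤ betti 𝕜 (flagComplex H) 1 := by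
  obtain ⟨H, hHG, hH, -, hcount⟩ := hB.exists_cliqueFree_three_le 𝕜 hG hm le_rfl
  refine ⟨H, hHG, hH, ?_⟩
  rw [betti_eq_finrank_cycles 𝕜 (boundaries_flagComplex_eq_bot 𝕜 hH)]
  have hall : (B.filter fun p => p.1 ≤ m) = B :=
    Multiset.filter_eq_self.mpr fun p hp => by have := hB.1 p hp; omega
  rwa [hall] at hcount
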